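/- arXiv:1203.6509 — 3 statements merged into one kernel-verified Lean document; each statement's English description precedes it below -/
import Mathlib

section
/- The content sum of a Young diagram is homogeneous of degree 3 under dilation: for every positive integer s and Young diagram λ, Σ_{(i,j) ∈ sλ} (j − i) = s³ · Σ_{(i,j) ∈ λ} (j − i), where the sums are over cells (i,j) (row i, column j) and are taken in ℤ. -/
/-- Dilation of a Young diagram: `(i, j) ∈ dilate s μ ↔ (i / s, j / s) ∈ μ`. -/
def YoungDiagram.dilate (s : ℕ) (μ : YoungDiagram) : YoungDiagram where
  cells := (Finset.range (s * μ.colLen 0) ×ˢ Finset.range (s * μ.rowLen 0)).filter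
    (fun p => (p.1 / s, p.2 / s) ∈ μ)
  isLowerSet := by
    rintro ⟨i1, j1⟩ ⟨i2, j2⟩ ⟨hi, hj⟩ h
    simp only [Finset.coe_filter, Finset.mem_product, Finset.mem_range, Set.mem_setOf_eq] at h ⊢
    exact ⟨⟨lt_of_le_of_lt hi h.1.1, lt_of_le_of_lt hj h.1.2⟩,
      μ.isLowerSet ⟨Nat.div_le_div_right hi, Nat.div_le_div_right hj⟩ h.2⟩

theorem YoungDiagram.mem_dilate {s : ℕ} (hs : 0 < s) (μ : YoungDiagram) (i j : ℕ) :
    (i, j) ∈ μ.dilate s ↔ (i / s, j / s) ∈ μ := by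
  constructor
  · intro h
    change (i, j) ∈ (μ.dilate s).cells at h
    simp only [YoungDiagram.dilate, Finset.mem_filter, Finset.mem_product, Finset.mem_range] at h
    exact h.2
  · intro h
    show (i, j) ∈ (μ.dilate s).cells
    simp only [YoungDiagram.dilate, Finset.mem_filter, Finset.mem_product, Finset.mem_range]
    refine ⟨⟨?_, ?_⟩, h⟩
    · have h1 : i / s < μ.colLen 0 :=
        lt_of_lt_of_le (YoungDiagram.mem_iff_lt_colLen.mp h) (μ.colLen_anti 0 _ (Nat.zero_le _))
      have := (Nat.div_lt_iff_lt_mul hs).mp h1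
      simpa [Nat.mul_comm] using this
    · have h1 : j / s < μ.rowLen 0 :=
        lt_of_lt_of_le (YoungDiagram.mem_iff_lt_rowLen.mp h) (μ.rowLen_anti 0 _ (Nat.zero_le _))
      have := (Nat.div_lt_iff_lt_mul hs).mp h1
      simpa [Nat.mul_comm] using this

/-- The sum of contents `j - i` over the cells `(i, j)` of a Young diagram. -/
def YoungDiagram.contentSum (μ : YoungDiagram) : ℤ :=
  ∑ c ∈ μ.cells, ((c.2 : ℤ) - (c.1 : ℤ))

/-!
Write a cell of `sλ` as `(s i + a, s j + b)` with `(i, j) ∈ λ` and `a, b < s`. Its content is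
`s (j - i) + (b - a)`. Summed over the `s²` offsets `(a, b)`, the offset contents cancel by the
symmetry `a ↔ b`, so each cell of `λ` contributes `s³ (j - i)`.
-/

open Finset

theorem Finset.sum_product_sub_eq_zero {α G : Type*} [AddCommGroup G] (t : Finset α)
    (f : α → G) : ∑ x ∈ t ×ˢ t, (f x.2 - f x.1) = 0 := by
  rw [sum_sub_distrib, sum_product, sum_product_right, sub_self]

theorem Nat.mul_add_div_of_lt {s q r : ℕ} (hr : r < s) : (s * q + r) / s = q := by
  rw [Nat.mul_add_div (by omega), Nat.div_eq_of_lt hr, add_zero]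

namespace YoungDiagram

variable {s : ℕ}

theorem mul_add_mem_dilate_iff (hs : 0 < s) (μ : YoungDiagram) {i j a b : ℕ} (ha : a < s)
    (hb : b < s) : (s * i + a, s * j + b) ∈ μ.dilate s ↔ (i, j) ∈ μ := by
  rw [mem_dilate hs, Nat.mul_add_div_of_lt ha, Nat.mul_add_div_of_lt hb]

theorem sum_cells_dilate {M : Type*} [AddCommMonoid M] (hs : 0 < s) (μ : YoungDiagram)
    (f : ℕ × ℕ → M) :
    ∑ c ∈ (μ.dilate s).cells, f c =
      ∑ c ∈ μ.cells, ∑ r ∈ range s ×ˢ range s, f (s * c.1 + r.1, s * c.2 + r.2) := by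
  rw [← sum_product' μ.cells (range s ×ˢ range s) fun c r => f (s * c.1 + r.1, s * c.2 + r.2)]
  refine sum_nbij' (fun c => ((c.1 / s, c.2 / s), (c.1 % s, c.2 % s)))
    (fun x => (s * x.1.1 + x.2.1, s * x.1.2 + x.2.2)) ?_ ?_ ?_ ?_ ?_
  · rintro ⟨i, j⟩ hc
    simp only [mem_product, mem_range]
    exact ⟨(mem_dilate hs μ i j).1 hc, Nat.mod_lt _ hs, Nat.mod_lt _ hs⟩
  · rintro ⟨⟨i, j⟩, a, b⟩ hx
    simp only [mem_product, mem_range] at hx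
    obtain ⟨hc, ha, hb⟩ := hx
    exact (mul_add_mem_dilate_iff hs μ ha hb).2 hc
  · rintro ⟨i, j⟩ -
    simp only [Nat.div_add_mod]
  · rintro ⟨⟨i, j⟩, a, b⟩ hx
    simp only [mem_product, mem_range] at hx
    obtain ⟨-, ha, hb⟩ := hx
    simp only [Nat.mul_add_div_of_lt ha, Nat.mul_add_div_of_lt hb, Nat.mul_add_mod,
      Nat.mod_eq_of_lt ha, Nat.mod_eq_of_lt hb]
  · rintro ⟨i, j⟩ -
    simp only [Nat.div_add_mod]

end YoungDiagram

/-- The content sum is homogeneous of degree 3 under dilation. -/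
theorem contentSum_dilate (s : ℕ) (hs : 0 < s) (μ : YoungDiagram) :
    (μ.dilate s).contentSum = (s : ℤ) ^ 3 * μ.contentSum := by
  unfold YoungDiagram.contentSum
  rw [YoungDiagram.sum_cells_dilate hs, mul_sum]
  refine sum_congr rfl fun c _ => ?_
  have content_split : ∀ r : ℕ × ℕ, ((s * c.2 + r.2 : ℕ) : ℤ) - ((s * c.1 + r.1 : ℕ) : ℤ) =
      s * ((c.2 : ℤ) - c.1) + ((r.2 : ℤ) - r.1) := fun r => by push_cast; ring
  simp only [content_split, sum_add_distrib, sum_product_sub_eq_zero, sum_const, card_product,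
    card_range, nsmul_eq_mul]
  push_cast
  ring
end

section
/- If σ₁ and σ₂ are permutations of {1,…,k} whose product σ₁σ₂ is a single k-cycle, then the numbers of cycles satisfy c(σ₁) + c(σ₂) ≤ k + 1, where c(σ) denotes the number of orbits of σ on {1,…,k} (including fixed points). -/
open Equiv

/-- The number of cycles (orbits, including fixed points) of a permutation of `Fin k`. -/
def cycleCount {k : ℕ} (σ : Equiv.Perm (Fin k)) : ℕ :=
  σ.cycleType.card + (k - σ.support.card)

/-!
Count the cycles of a permutation as the classes of `SameCycle`. Multiplying by a transposition
`swap x y` changes this count by at most one, since the new orbits are unions of the old ones glued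
at most along `x ~ y`; it changes the count by an odd amount, since it flips the sign; and it
cannot merge orbits when `x` and `y` already lie in one orbit. Hence `swap x (g x) * g` has one
cycle more than `g` and a smaller support, and induction on the support of `g` gives
`c(f) + c(g) ≤ k + c(f * g)`.
-/

open Finset

namespace Equiv.Perm

variable {α : Type*}

theorem SameCycle.eq_of_forall_apply_eq {β : Type*} {f : Perm α} {φ : α → β}
    (hφ : ∀ a, φ (f a) = φ a) {a b : α} (h : f.SameCycle a b) : φ a = φ b := by
  have key : ∀ (n : ℤ) (c : α), φ ((f ^ n) c) = φ c := by
    intro n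
    induction n using Int.induction_on with
    | zero => exact fun c => by rw [zpow_zero, one_apply]
    | succ n ih => exact fun c => by rw [zpow_add_one, mul_apply, ih, hφ]
    | pred n ih =>
      exact fun c => by
        rw [zpow_sub_one, mul_apply, ih, ← hφ, ← mul_apply, mul_inv_cancel, one_apply]
  obtain ⟨n, rfl⟩ := h
  exact (key n a).symm

theorem apply_swap_apply_eq {β : Type*} [DecidableEq α] {φ : α → β} {x y : α}
    (h : φ x = φ y) (a : α) : φ (swap x y a) = φ a := by
  rw [swap_apply_def]
  split_ifs with hx hy
  · rw [hx, h]
  · rw [hy, h]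
  · rfl

noncomputable def numOrbits (f : Perm α) : ℕ := Nat.card (Quotient (SameCycle.setoid f))

theorem numOrbits_le_numOrbits_mul_swap_add_one [Finite α] [DecidableEq α] (f : Perm α)
    (x y : α) : f.numOrbits ≤ (f * swap x y).numOrbits + 1 := by
  classical
  let q : α → Quotient (SameCycle.setoid f) := Quotient.mk _
  let φ : α → Quotient (SameCycle.setoid f) := fun a => if q a = q y then q x else q a
  have hqf : ∀ c, q (f c) = q c := fun c =>
    Quotient.sound (sameCycle_apply_left.2 (SameCycle.refl f c))
  have hφ : ∀ a, φ ((f * swap x y) a) = φ a := fun a => by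
    rw [mul_apply]
    dsimp only [φ]
    rw [hqf]
    exact apply_swap_apply_eq (φ := φ) (by simp [φ]) a
  let Φ : Option (Quotient (SameCycle.setoid (f * swap x y))) → Quotient (SameCycle.setoid f) :=
    fun o => o.elim (q y)
      (Quotient.lift φ fun _ _ (h : (f * swap x y).SameCycle _ _) => h.eq_of_forall_apply_eq hφ)
  have hΦ : Function.Surjective Φ := by
    rintro ⟨a⟩
    by_cases ha : q a = q y
    · exact ⟨none, ha.symm⟩
    · exact ⟨some ⟦a⟧, if_neg ha⟩
  calc f.numOrbits ≤ Nat.card (Option (Quotient (SameCycle.setoid (f * swap x y)))) :=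
        Nat.card_le_card_of_surjective Φ hΦ
    _ = (f * swap x y).numOrbits + 1 := Finite.card_option

section Fintype

variable [Fintype α] [DecidableEq α]

theorem numOrbits_eq (f : Perm α) :
    f.numOrbits = f.cycleType.card + (Fintype.card α - #f.support) := by
  classical
  let p : Quotient (SameCycle.setoid f) → Prop :=
    Quotient.lift (· ∈ f.support) fun _ _ (h : f.SameCycle _ _) => propext h.mem_support_iff
  have hcycles : #(univ.filter p) = #f.cycleFactorsFinset := by
    refine card_bij
      (fun c _ => Quotient.lift f.cycleOf (fun _ _ (h : f.SameCycle _ _) => h.cycleOf_eq) c)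
      ?_ ?_ ?_
    · rintro ⟨a⟩ ha
      exact cycleOf_mem_cycleFactorsFinset_iff.2 (mem_filter.1 ha).2
    · rintro ⟨a⟩ ha ⟨b⟩ hb hab
      exact Quotient.sound ((sameCycle_iff_cycleOf_eq_of_mem_support
        (mem_filter.1 ha).2 (mem_filter.1 hb).2).2 hab)
    · intro c hc
      obtain ⟨a, ha⟩ := (mem_cycleFactorsFinset_iff.1 hc).1.nonempty_support
      exact ⟨⟦a⟧, mem_filter.2 ⟨mem_univ _, mem_cycleFactorsFinset_support_le hc ha⟩,
        (cycle_is_cycleOf ha hc).symm⟩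
  have hfixed : #(univ.filter (¬ p ·)) = #f.supportᶜ := by
    symm
    refine card_bij (fun a _ => ⟦a⟧) ?_ ?_ ?_
    · intro a ha
      exact mem_filter.2 ⟨mem_univ _, mem_compl.1 ha⟩
    · intro a ha b _ hab
      exact (Quotient.exact hab).eq_of_left (notMem_support.1 (mem_compl.1 ha))
    · rintro ⟨a⟩ ha
      exact ⟨a, mem_compl.2 (mem_filter.1 ha).2, rfl⟩
  rw [numOrbits, Nat.card_eq_fintype_card, ← card_univ, ← card_filter_add_card_filter_not p,
    hcycles, hfixed, card_compl, cycleType_def, Multiset.card_map]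
  rfl

theorem numOrbits_one : (1 : Perm α).numOrbits = Fintype.card α := by
  simp [numOrbits_eq]

theorem sign_mul_neg_one_pow_numOrbits (f : Perm α) :
    sign f * (-1) ^ f.numOrbits = (-1) ^ Fintype.card α := by
  have hexp : #f.support + f.cycleType.card + f.numOrbits =
      Fintype.card α + 2 * f.cycleType.card := by
    have := f.support.card_le_univ
    rw [numOrbits_eq]
    omega
  rw [sign_of_cycleType, sum_cycleType, ← pow_add, hexp, pow_add, pow_mul, neg_one_sq, one_pow,
    mul_one]

theorem numOrbits_swap_mul_ne (f : Perm α) {x y : α} (hxy : x ≠ y) :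
    (swap x y * f).numOrbits ≠ f.numOrbits := by
  intro h
  have := sign_mul_neg_one_pow_numOrbits (swap x y * f)
  rw [h, sign_mul, sign_swap hxy, ← sign_mul_neg_one_pow_numOrbits f, neg_one_mul, neg_mul]
    at this
  exact units_ne_neg_self _ this.symm

theorem numOrbits_lt_numOrbits_swap_mul {f : Perm α} {x y : α} (hxy : x ≠ y)
    (hsame : f.SameCycle x y) : f.numOrbits < (swap x y * f).numOrbits := by
  let q : α → Quotient (SameCycle.setoid f) := Quotient.mk _
  have hq : ∀ a, q ((swap x y * f) a) = q a := fun a => by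
    rw [mul_apply, apply_swap_apply_eq (φ := q) (Quotient.sound hsame)]
    exact Quotient.sound (sameCycle_apply_left.2 (SameCycle.refl f a))
  have hle : f.numOrbits ≤ (swap x y * f).numOrbits :=
    Nat.card_le_card_of_surjective
      (Quotient.lift q fun _ _ (h : (swap x y * f).SameCycle _ _) => h.eq_of_forall_apply_eq hq)
      fun c => c.inductionOn fun a => ⟨⟦a⟧, rfl⟩
  exact lt_of_le_of_ne hle (numOrbits_swap_mul_ne f hxy).symm

theorem numOrbits_add_numOrbits_le (f g : Perm α) :
    f.numOrbits + g.numOrbits ≤ Fintype.card α + (f * g).numOrbits := by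
  obtain rfl | hg := eq_or_ne g 1
  · rw [numOrbits_one, mul_one, add_comm]
  obtain ⟨x, hgx⟩ : ∃ x, g x ≠ x := by
    by_contra! hfix
    exact hg (ext hfix)
  have hsupp : #(swap x (g x) * g).support < #g.support := card_support_swap_mul hgx
  have hind := numOrbits_add_numOrbits_le (f * swap x (g x)) (swap x (g x) * g)
  have hmerge := numOrbits_le_numOrbits_mul_swap_add_one f x (g x)
  have hsplit := numOrbits_lt_numOrbits_swap_mul hgx.symm (sameCycle_apply_right.2 (.refl g x))
  rw [mul_assoc, swap_mul_self_mul] at hind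
  omega
termination_by #g.support

end Fintype

end Equiv.Perm

theorem cycleCount_eq_numOrbits {k : ℕ} (σ : Perm (Fin k)) : cycleCount σ = σ.numOrbits := by
  rw [Perm.numOrbits_eq, Fintype.card_fin]
  rfl

/-- If `σ₁σ₂` is a single `k`-cycle then `c(σ₁) + c(σ₂) ≤ k + 1`:
the genus of the associated bipartite map is non-negative. -/
theorem cycleCount_add_cycleCount_le (k : ℕ) (σ₁ σ₂ : Equiv.Perm (Fin k))
    (h : cycleCount (σ₁ * σ₂) = 1) :
    cycleCount σ₁ + cycleCount σ₂ ≤ k + 1 := by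
  simp only [cycleCount_eq_numOrbits] at h ⊢
  simpa [h] using Perm.numOrbits_add_numOrbits_le σ₁ σ₂
end

section
/- Let G be a finite bipartite multigraph with white vertex set W and black vertex set B, with a supply function p : W → ℝ with p(w) > 0 and a demand function d : B → ℝ with d(b) > 0. Suppose there exists a flow f assigning to each edge e a strictly positive real f(e) > 0 such that for each white vertex w the sum of f over edges incident to w equals p(w), and for each black vertex b the sum of f over edges incident to b equals d(b). Then for every bridge e of G (an edge whose removal disconnects its two endpoints), the connected component of G − e containing the white endpoint of e has total supply strictly greater than its total demand. -/
/-!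
Let `S` be the component of `G − e₀` containing the white endpoint of the bridge `e₀`. Every
edge other than `e₀` has either both or no endpoints in `S`, while `e₀` has only its white
endpoint there. Summing the flow over edges, the supply of `S` therefore counts exactly the
edges counted by its demand, plus `e₀`; so the two differ by `f e₀ > 0`.
-/

open Finset

open scoped Classical

theorem Finset.sum_filter_eq_sum_filter_comp_of_fiber {α E M : Type*} [Fintype α] [Fintype E]
    [AddCommMonoid M] (g : E → α) (f : E → M) (h : α → M)
    (hfiber : ∀ v, ∑ e ∈ univ.filter (fun e => g e = v), f e = h v) (P : α → Prop) :
    ∑ v ∈ univ.filter P, h v = ∑ e ∈ univ.filter (fun e => P (g e)), f e :=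
  calc ∑ v ∈ univ.filter P, h v
      = ∑ v ∈ univ.filter P, ∑ e ∈ univ.filter (fun e => g e = v), f e :=
        sum_congr rfl fun v _ => (hfiber v).symm
    _ = ∑ e ∈ univ.filter (fun e => P (g e)), f e := by
        convert sum_fiberwise_eq_sum_filter univ (univ.filter P) g f using 2
        simp

theorem supply_eq_demand_add_of_cut {W B E M : Type*} [Fintype W] [Fintype B] [Fintype E]
    [AddCommMonoid M] (w : E → W) (b : E → B) (p : W → M) (d : B → M) (f : E → M)
    (hsupply : ∀ v : W, ∑ e ∈ univ.filter (fun e => w e = v), f e = p v)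
    (hdemand : ∀ v : B, ∑ e ∈ univ.filter (fun e => b e = v), f e = d v)
    (e₀ : E) (SW : W → Prop) (SB : B → Prop)
    (hcut : ∀ e, e ≠ e₀ → (SW (w e) ↔ SB (b e))) (hw₀ : SW (w e₀)) (hb₀ : ¬ SB (b e₀)) :
    ∑ v ∈ univ.filter SW, p v = ∑ v ∈ univ.filter SB, d v + f e₀ := by
  have hedges : univ.filter (fun e => SW (w e)) = insert e₀ (univ.filter fun e => SB (b e)) := by
    ext e
    by_cases he : e = e₀
    · subst he
      simp [hw₀]
    · simp [he, hcut e he]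
  have he₀ : e₀ ∉ univ.filter fun e => SB (b e) := by simp [hb₀]
  rw [sum_filter_eq_sum_filter_comp_of_fiber w f p hsupply,
    sum_filter_eq_sum_filter_comp_of_fiber b f d hdemand, hedges, sum_insert he₀, add_comm]

theorem Relation.reflTransGen_iff_of_rel_of_rel {α : Type*} {r : α → α → Prop} {s x y : α}
    (hxy : r x y) (hyx : r y x) : ReflTransGen r s x ↔ ReflTransGen r s y :=
  ⟨fun h => h.tail hxy, fun h => h.tail hyx⟩

theorem supply_gt_demand_in_bridge_component_general
    {W B E : Type} [Fintype W] [Fintype B] [Fintype E]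
    (w : E → W) (b : E → B) (p : W → ℝ) (d : B → ℝ) (f : E → ℝ)
    (hf : ∀ e, 0 < f e)
    (hsupply : ∀ v : W, ∑ e ∈ Finset.univ.filter (fun e => w e = v), f e = p v)
    (hdemand : ∀ v : B, ∑ e ∈ Finset.univ.filter (fun e => b e = v), f e = d v)
    (e₀ : E)
    (Adj : W ⊕ B → W ⊕ B → Prop)
    (hAdj : ∀ x y, Adj x y ↔ ∃ e, e ≠ e₀ ∧
      ((x = Sum.inl (w e) ∧ y = Sum.inr (b e)) ∨ (x = Sum.inr (b e) ∧ y = Sum.inl (w e))))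
    (Reach : W ⊕ B → W ⊕ B → Prop)
    (hReach : ∀ x y, Reach x y ↔ Relation.ReflTransGen Adj x y)
    (hbridge : ¬ Reach (Sum.inl (w e₀)) (Sum.inr (b e₀))) :
    (∑ v ∈ Finset.univ.filter (fun v : B => Reach (Sum.inl (w e₀)) (Sum.inr v)), d v) <
      ∑ v ∈ Finset.univ.filter (fun v : W => Reach (Sum.inl (w e₀)) (Sum.inl v)), p v := by
  have hcut : ∀ e, e ≠ e₀ →
      (Reach (Sum.inl (w e₀)) (Sum.inl (w e)) ↔ Reach (Sum.inl (w e₀)) (Sum.inr (b e))) :=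
    fun e he => by
      rw [hReach, hReach]
      exact Relation.reflTransGen_iff_of_rel_of_rel
        ((hAdj _ _).2 ⟨e, he, Or.inl ⟨rfl, rfl⟩⟩) ((hAdj _ _).2 ⟨e, he, Or.inr ⟨rfl, rfl⟩⟩)
  have hroot : Reach (Sum.inl (w e₀)) (Sum.inl (w e₀)) := (hReach _ _).2 .refl
  rw [supply_eq_demand_add_of_cut w b p d f hsupply hdemand e₀
    (fun v => Reach (Sum.inl (w e₀)) (Sum.inl v)) (fun v => Reach (Sum.inl (w e₀)) (Sum.inr v))
    hcut hroot hbridge]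
  linarith [hf e₀]

open scoped Classical in
/-- In a finite bipartite multigraph (edges `E` joining white endpoint `w e` to black
endpoint `b e`) carrying a strictly positive flow `f` saturating strictly positive
supplies `p` at white vertices and strictly positive demands `d` at black vertices,
for every bridge `e₀` the connected component of `G − e₀` containing the white endpoint
of `e₀` has total supply strictly greater than its total demand.  Here `Reach` is
reachability in the graph with the edge `e₀` removed, and the bridge hypothesis says
that the two endpoints of `e₀` are disconnected in `G − e₀`. -/
theorem supply_gt_demand_in_bridge_component
    {W B E : Type} [Fintype W] [Fintype B] [Fintype E]
    (w : E → W) (b : E → B) (p : W → ℝ) (d : B → ℝ) (f : E → ℝ)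
    (hp : ∀ v, 0 < p v) (hd : ∀ v, 0 < d v) (hf : ∀ e, 0 < f e)
    (hsupply : ∀ v : W, ∑ e ∈ Finset.univ.filter (fun e => w e = v), f e = p v)
    (hdemand : ∀ v : B, ∑ e ∈ Finset.univ.filter (fun e => b e = v), f e = d v)
    (e₀ : E)
    (Adj : W ⊕ B → W ⊕ B → Prop)
    (hAdj : ∀ x y, Adj x y ↔ ∃ e, e ≠ e₀ ∧
      ((x = Sum.inl (w e) ∧ y = Sum.inr (b e)) ∨ (x = Sum.inr (b e) ∧ y = Sum.inl (w e))))
    (Reach : W ⊕ B → W ⊕ B → Prop)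
    (hReach : ∀ x y, Reach x y ↔ Relation.ReflTransGen Adj x y)
    (hbridge : ¬ Reach (Sum.inl (w e₀)) (Sum.inr (b e₀))) :
    (∑ v ∈ Finset.univ.filter (fun v : B => Reach (Sum.inl (w e₀)) (Sum.inr v)), d v) <
      ∑ v ∈ Finset.univ.filter (fun v : W => Reach (Sum.inl (w e₀)) (Sum.inl v)), p v :=
  supply_gt_demand_in_bridge_component_general w b p d f hf hsupply hdemand e₀ Adj hAdj Reach hReach
    hbridge
end
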